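/- arXiv:1111.6268 — 3 statements merged into one kernel-verified Lean document; each statement's English description precedes it below -/
import Mathlib

section
/- Let k : (0,∞) → ℝ be C¹ with k > 0, k' < 0, k'' > 0 and ∫_z^∞ k(y)² dy < ∞ for all z > 0, with k(z) → 0 as z → ∞. Define N(z) = (1/2) k(z)³ + 2 k'(z) ∫_z^∞ k(y)² dy − k(z) ∫_z^∞ k(y)² dy. Then N(z) < 0 for all z in the domain. -/
open Real Set Filter MeasureTheory
open scoped Topology

/-!
Convexity of `k` puts it above its tangent line `t(y) = k z + k' z (y - z)` at `z`, which
decreases to `0` at `z - k z / k' z`. Integrating `t²` over that interval gives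
`k z³ ≤ -3 k' z ∫_z^∞ k²`, and substituting this into `N` yields
`N(z) ≤ (k' z / 2 - k z) ∫_z^∞ k² < 0`.
-/

theorem ConvexOn.add_mul_sub_le_of_hasDerivAt {S : Set ℝ} {f : ℝ → ℝ} {x y f' : ℝ}
    (hfc : ConvexOn ℝ S f) (hx : x ∈ S) (hy : y ∈ S) (hf : HasDerivAt f f' x) :
    f x + f' * (y - x) ≤ f y := by
  rcases lt_trichotomy x y with hxy | rfl | hxy
  · have := hfc.le_slope_of_hasDerivAt hx hy hxy hf
    rw [slope_def_field, le_div_iff₀ (sub_pos.2 hxy)] at this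
    linarith
  · simp
  · have := hfc.slope_le_of_hasDerivAt hy hx hxy hf
    rw [slope_def_field, div_le_iff₀ (sub_pos.2 hxy)] at this
    linarith

theorem integral_sq_affine_eq_cube_div {a c z : ℝ} (hc : c ≠ 0) :
    ∫ y in z..z - a / c, (a + c * (y - z)) ^ 2 = a ^ 3 / (-3 * c) := by
  have hlin : ∀ y, a + c * (y - z) = c * y + (a - c * z) := fun y => by ring
  simp only [hlin, intervalIntegral.integral_comp_mul_add (fun x => x ^ 2) hc, integral_pow,
    smul_eq_mul]
  field_simp
  ring

theorem ConvexOn.cube_le_neg_three_mul_deriv_mul_integral_sq {f : ℝ → ℝ} {z f' : ℝ}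
    (hfc : ConvexOn ℝ (Ici z) f) (hf : HasDerivAt f f' z) (hf' : f' < 0) (hfz : 0 ≤ f z)
    (hint : IntegrableOn (fun y => f y ^ 2) (Ioi z)) :
    f z ^ 3 ≤ -3 * f' * ∫ y in Ioi z, f y ^ 2 := by
  set root := z - f z / f'
  have hz_root : z ≤ root := by
    have : f z / f' ≤ 0 := div_nonpos_of_nonneg_of_nonpos hfz hf'.le
    linarith
  have htangent_sq : ∀ y ∈ Ioc z root, (f z + f' * (y - z)) ^ 2 ≤ f y ^ 2 := by
    intro y hy
    have hroot : f' * (root - z) = -f z := by simp only [root]; field_simp [hf'.ne]; ring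
    have hnonneg : 0 ≤ f z + f' * (y - z) := by
      nlinarith [mul_le_mul_of_nonpos_left (sub_le_sub_right hy.2 z) hf'.le]
    exact pow_le_pow_left₀ hnonneg
      (hfc.add_mul_sub_le_of_hasDerivAt self_mem_Ici (mem_Ici.2 hy.1.le) hf) 2
  have hlower : f z ^ 3 / (-3 * f') ≤ ∫ y in Ioi z, f y ^ 2 :=
    calc f z ^ 3 / (-3 * f')
        = ∫ y in Ioc z root, (f z + f' * (y - z)) ^ 2 := by
          rw [← intervalIntegral.integral_of_le hz_root, integral_sq_affine_eq_cube_div hf'.ne]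
      _ ≤ ∫ y in Ioc z root, f y ^ 2 :=
          setIntegral_mono_on (Continuous.integrableOn_Ioc (by fun_prop))
            (hint.mono_set Ioc_subset_Ioi_self) measurableSet_Ioc htangent_sq
      _ ≤ ∫ y in Ioi z, f y ^ 2 :=
          setIntegral_mono_set hint (ae_of_all _ fun y => sq_nonneg _)
            Ioc_subset_Ioi_self.eventuallyLE
  rw [div_le_iff₀ (by linarith)] at hlower
  linarith

theorem stmt_5_general (k k' k'' : ℝ → ℝ)
    (hk_deriv : ∀ z > 0, HasDerivAt k (k' z) z)
    (hk'_deriv : ∀ z > 0, HasDerivAt k' (k'' z) z)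
    (hk_pos : ∀ z > 0, 0 < k z)
    (hk'_neg : ∀ z > 0, k' z < 0)
    (hk''_pos : ∀ z > 0, 0 < k'' z)
    (hint : ∀ z > 0, IntegrableOn (fun y => (k y) ^ 2) (Set.Ioi z)) :
    ∀ z > 0,
      (1/2) * (k z) ^ 3 + 2 * k' z * (∫ y in Set.Ioi z, (k y) ^ 2)
        - k z * (∫ y in Set.Ioi z, (k y) ^ 2) < 0 := by
  have hconvex : ConvexOn ℝ (Ioi 0) k := by
    refine convexOn_of_hasDerivWithinAt2_nonneg (f' := k') (f'' := k'') (convex_Ioi 0)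
      (fun x hx => (hk_deriv x hx).continuousAt.continuousWithinAt) ?_ ?_ ?_ <;>
      simp only [interior_Ioi]
    · exact fun x hx => (hk_deriv x hx).hasDerivWithinAt
    · exact fun x hx => (hk'_deriv x hx).hasDerivWithinAt
    · exact fun x hx => (hk''_pos x hx).le
  intro z hz
  have ha := hk_pos z hz
  have hc := hk'_neg z hz
  have hconvex_z : ConvexOn ℝ (Ici z) k := hconvex.subset (Ici_subset_Ioi.2 hz) (convex_Ici z)
  have hcube := hconvex_z.cube_le_neg_three_mul_deriv_mul_integral_sq (hk_deriv z hz) hc ha.le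
    (hint z hz)
  have hI : 0 < ∫ y in Ioi z, k y ^ 2 := by
    by_contra! h
    nlinarith [pow_pos ha 3]
  nlinarith [mul_pos hI ha, mul_pos hI (neg_pos.2 hc)]

/-- Smith's medium condition quantity `N(z) = ½k³ + 2k'∫_z^∞ k² − k∫_z^∞ k²` is negative. -/
theorem stmt_5 (k k' k'' : ℝ → ℝ)
    (hk_deriv : ∀ z > 0, HasDerivAt k (k' z) z)
    (hk'_deriv : ∀ z > 0, HasDerivAt k' (k'' z) z)
    (hk_pos : ∀ z > 0, 0 < k z)
    (hk'_neg : ∀ z > 0, k' z < 0)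
    (hk''_pos : ∀ z > 0, 0 < k'' z)
    (hint : ∀ z > 0, IntegrableOn (fun y => (k y) ^ 2) (Set.Ioi z))
    (hk_lim : Tendsto k atTop (𝓝 0)) :
    ∀ z > 0,
      (1/2) * (k z) ^ 3 + 2 * k' z * (∫ y in Set.Ioi z, (k y) ^ 2)
        - k z * (∫ y in Set.Ioi z, (k y) ^ 2) < 0 :=
  stmt_5_general k k' k'' hk_deriv hk'_deriv hk_pos hk'_neg hk''_pos hint
end

section
/- Let f : ℝ → ℝ be C², positive, with f·f'' ≥ (f')², and let E(τ,S) = f(S) g(τ) with g > 0, g'' > 0 and the additional condition (k(z) − 2k'(z)) ∫_z^∞ k(y)² dy ≥ k(z)³ where g(τ) = ∫_{ln(τ+1)}^∞ k(y)² dy and z = ln(τ+1). Then E_{ττ}·E_{SS} ≥ (E_{τS})², i.e. E is jointly convex in (τ,S) (given E_{ττ} > 0, E_{SS} ≥ 0). -/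
open Real Set Filter MeasureTheory
open scoped Topology

/-! With `E = f(S) g(τ)` the claim is `(f f'')(g g'') ≥ f'² g'²`, so it suffices that `g`, like
`f`, is log-convex. Writing `z = log (τ + 1)`, the fundamental theorem of calculus for the tail
integral gives `g' = -k(z)² / (τ + 1)` and `g'' = (k² - 2 k k')(z) / (τ + 1)²`, so `g g'' ≥ g'²` is
the hypothesis `(k - 2k') ∫_z^∞ k² ≥ k³` multiplied by `k(z) > 0`. -/

theorem hasDerivAt_integral_Ioi {E : Type*} [NormedAddCommGroup E] [NormedSpace ℝ E]
    [CompleteSpace E] {h : ℝ → E} {a z : ℝ} (hint : IntegrableOn h (Ioi a)) (haz : a < z)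
    (hc : ContinuousAt h z) : HasDerivAt (fun x => ∫ y in Ioi x, h y) (-h z) z := by
  have hmeas : StronglyMeasurableAtFilter h (𝓝 z) :=
    AEStronglyMeasurable.stronglyMeasurableAtFilter_of_mem hint.aestronglyMeasurable
      (Ioi_mem_nhds haz)
  have hii : IntervalIntegrable h volume a z :=
    (intervalIntegrable_iff_integrableOn_Ioc_of_le haz.le).2 (hint.mono_set Ioc_subset_Ioi_self)
  refine ((intervalIntegral.integral_hasDerivAt_right hii hmeas hc).const_sub
    (∫ y in Ioi a, h y)).congr_of_eventuallyEq ?_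
  filter_upwards [Ioi_mem_nhds haz] with x hx
  rw [← intervalIntegral.integral_Ioi_sub_Ioi hint hx.le, sub_sub_cancel]

theorem sq_mul_le_mul_mul_mul {a b c d x y : ℝ} (hx : x ^ 2 ≤ a * b) (hy : y ^ 2 ≤ c * d) :
    (x * y) ^ 2 ≤ (a * d) * (b * c) :=
  calc (x * y) ^ 2 = x ^ 2 * y ^ 2 := mul_pow x y 2
    _ ≤ (a * b) * (c * d) := mul_le_mul hx hy (sq_nonneg y) ((sq_nonneg x).trans hx)
    _ = (a * d) * (b * c) := by ring

section TailOfLog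

variable {k k' : ℝ → ℝ} {τ : ℝ}

theorem hasDerivAt_integral_Ioi_log_add_one
    (hint : ∀ z > 0, IntegrableOn (fun y => k y ^ 2) (Ioi z)) (hkc : ContinuousAt k (log (τ + 1)))
    (hτ : 0 < τ) :
    HasDerivAt (fun σ => ∫ y in Ioi (log (σ + 1)), k y ^ 2) (-k (log (τ + 1)) ^ 2 / (τ + 1)) τ := by
  have hz : 0 < log (τ + 1) := log_pos (by linarith)
  have := (hasDerivAt_integral_Ioi (hint _ (half_pos hz)) (half_lt_self hz) (hkc.pow 2)).comp τ
    (((hasDerivAt_id' τ).add_const 1).log (by positivity))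
  exact this.congr_deriv (by ring)

theorem hasDerivAt_neg_sq_log_add_one_div (hk : HasDerivAt k (k' (log (τ + 1))) (log (τ + 1)))
    (hτ : 0 < τ) :
    HasDerivAt (fun σ => -k (log (σ + 1)) ^ 2 / (σ + 1))
      ((k (log (τ + 1)) ^ 2 - 2 * k (log (τ + 1)) * k' (log (τ + 1))) / (τ + 1) ^ 2) τ := by
  have hσ := (hasDerivAt_id' τ).add_const 1
  have := ((hk.comp τ (hσ.log (by positivity))).pow 2).neg.div hσ (by positivity)
  refine this.congr_deriv ?_
  simp only [Function.comp_apply, Pi.neg_apply, Pi.pow_apply]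
  field_simp
  ring

end TailOfLog

theorem sq_deriv_le_mul_deriv2_of_eq_integral_Ioi_log {g g' g'' k k' : ℝ → ℝ}
    (hk_pos : ∀ z > 0, 0 < k z) (hk_deriv : ∀ z > 0, HasDerivAt k (k' z) z)
    (hg : ∀ τ > 0, g τ = ∫ y in Ioi (log (τ + 1)), k y ^ 2)
    (hg_deriv : ∀ τ > 0, HasDerivAt g (g' τ) τ) (hg'_deriv : ∀ τ > 0, HasDerivAt g' (g'' τ) τ)
    (hg_pos : ∀ τ > 0, 0 < g τ)
    (hkcvx : ∀ z > 0, (k z - 2 * k' z) * (∫ y in Ioi z, k y ^ 2) ≥ k z ^ 3)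
    {τ : ℝ} (hτ : 0 < τ) :
    g' τ ^ 2 ≤ g τ * g'' τ := by
  -- `g > 0` excludes the junk value `0` of a non-integrable tail.
  have hint : ∀ z > 0, IntegrableOn (fun y => k y ^ 2) (Ioi z) := fun z hz => by
    have hτz : 0 < exp z - 1 := by linarith [add_one_lt_exp hz.ne']
    refine Integrable.of_integral_ne_zero ?_
    simpa [hg _ hτz] using (hg_pos _ hτz).ne'
  have hlog : ∀ σ > 0, 0 < log (σ + 1) := fun σ hσ => log_pos (by linarith)
  have hg' : ∀ σ > 0, g' σ = -k (log (σ + 1)) ^ 2 / (σ + 1) := fun σ hσ =>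
    (hg_deriv σ hσ).unique <| (hasDerivAt_integral_Ioi_log_add_one hint
      (hk_deriv _ (hlog σ hσ)).continuousAt hσ).congr_of_eventuallyEq
      (eventually_of_mem (Ioi_mem_nhds hσ) hg)
  have hg'' :
      g'' τ = (k (log (τ + 1)) ^ 2 - 2 * k (log (τ + 1)) * k' (log (τ + 1))) / (τ + 1) ^ 2 :=
    (hg'_deriv τ hτ).unique <| (hasDerivAt_neg_sq_log_add_one_div (hk_deriv _ (hlog τ hτ))
      hτ).congr_of_eventuallyEq (eventually_of_mem (Ioi_mem_nhds hτ) hg')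
  set z := log (τ + 1)
  have hkey : k z ^ 4 ≤ (∫ y in Ioi z, k y ^ 2) * (k z ^ 2 - 2 * k z * k' z) :=
    calc k z ^ 4 = k z * k z ^ 3 := by ring
      _ ≤ k z * ((k z - 2 * k' z) * ∫ y in Ioi z, k y ^ 2) :=
        mul_le_mul_of_nonneg_left (hkcvx z (hlog τ hτ)) (hk_pos z (hlog τ hτ)).le
      _ = _ := by ring
  rw [hg τ hτ, hg' τ hτ, hg'', div_pow, neg_sq, ← pow_mul, mul_div_assoc']
  exact div_le_div_of_nonneg_right hkey (sq_nonneg _)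

theorem stmt_16_general (f f' f'' g g' g'' k k' : ℝ → ℝ)
    (hf_logcvx : ∀ S, f S * f'' S ≥ (f' S) ^ 2)
    (hk_pos : ∀ z > 0, 0 < k z)
    (hk_deriv : ∀ z > 0, HasDerivAt k (k' z) z)
    (hg : ∀ τ > 0, g τ = ∫ y in Set.Ioi (Real.log (τ + 1)), (k y) ^ 2)
    (hg_deriv : ∀ τ > 0, HasDerivAt g (g' τ) τ)
    (hg'_deriv : ∀ τ > 0, HasDerivAt g' (g'' τ) τ)
    (hg_pos : ∀ τ > 0, 0 < g τ)
    (hkcvx : ∀ z > 0, (k z - 2 * k' z) * (∫ y in Set.Ioi z, (k y) ^ 2) ≥ (k z) ^ 3) :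
    ∀ τ > 0, ∀ S : ℝ, (f S * g'' τ) * (f'' S * g τ) ≥ (f' S * g' τ) ^ 2 := fun τ hτ S =>
  sq_mul_le_mul_mul_mul (hf_logcvx S) <| sq_deriv_le_mul_deriv2_of_eq_integral_Ioi_log hk_pos
    hk_deriv hg hg_deriv hg'_deriv hg_pos hkcvx hτ

/-- Joint convexity `E_{ττ}E_{SS} ≥ E_{τS}²` for separable energies `E = f(S)g(τ)` with
log-convex `f` and `g(τ) = ∫_{ln(τ+1)}^∞ k²` satisfying `(k − 2k')∫_z^∞ k² ≥ k³`. -/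
theorem stmt_16 (f f' f'' g g' g'' k k' : ℝ → ℝ)
    (hf_C2 : ContDiff ℝ 2 f)
    (hf_deriv : ∀ S, HasDerivAt f (f' S) S)
    (hf'_deriv : ∀ S, HasDerivAt f' (f'' S) S)
    (hf_pos : ∀ S, 0 < f S)
    (hf''_nonneg : ∀ S, 0 ≤ f'' S)
    (hf_logcvx : ∀ S, f S * f'' S ≥ (f' S) ^ 2)
    (hk_pos : ∀ z > 0, 0 < k z)
    (hk_deriv : ∀ z > 0, HasDerivAt k (k' z) z)
    (hk'_neg : ∀ z > 0, k' z < 0)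
    (hg : ∀ τ > 0, g τ = ∫ y in Set.Ioi (Real.log (τ + 1)), (k y) ^ 2)
    (hg_deriv : ∀ τ > 0, HasDerivAt g (g' τ) τ)
    (hg'_deriv : ∀ τ > 0, HasDerivAt g' (g'' τ) τ)
    (hg_pos : ∀ τ > 0, 0 < g τ)
    (hg''_pos : ∀ τ > 0, 0 < g'' τ)
    (hkcvx : ∀ z > 0, (k z - 2 * k' z) * (∫ y in Set.Ioi z, (k y) ^ 2) ≥ (k z) ^ 3) :
    ∀ τ > 0, ∀ S : ℝ, (f S * g'' τ) * (f'' S * g τ) ≥ (f' S * g' τ) ^ 2 :=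
  stmt_16_general f f' f'' g g' g'' k k' hf_logcvx hk_pos hk_deriv hg hg_deriv hg'_deriv hg_pos
    hkcvx
end

section
/- Fix σ ∈ (1/2,1] and define, for φ > 0, the map h ↦ F(h₀,h)·e^{−φ(h)/2} on the shock/rarefaction composite curve, where for a fixed base point h₀ the composite function F(h₀,h) equals f(φ₀, φ(h)) = √(q(φ₀, φ(h))) for shocks (h₀ < h) and (φ₀/φ(h))^σ for rarefactions (h₀ ≥ h), with φ(h) the inverse of h(φ) = −∫_{ln2}^φ w^{−σ}√(1+2σ/w) dw. Then for fixed h₀, the function h ↦ F(h₀,h) e^{−φ(h)/2} is strictly increasing with range (0, ∞). -/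
open Real Set Filter MeasureTheory
open scoped Topology

noncomputable def qn (σ x y : ℝ) : ℝ := x / (2 * σ - 1) + 1 / 2 - Real.exp (y - x) / 2

noncomputable def qd (σ x y : ℝ) : ℝ := y / (2 * σ - 1) + 1 / 2 - Real.exp (x - y) / 2

private lemma qd_lt_qd (σ x : ℝ) (hσ : 1/2 < σ) {a b : ℝ} (hab : a < b) :
    qd σ x a < qd σ x b := by
  have hc : (0:ℝ) < 2*σ - 1 := by linarith
  have h1 : a / (2*σ-1) < b / (2*σ-1) := div_lt_div_of_pos_right hab hc
  have h2 : Real.exp (x - b) < Real.exp (x - a) := Real.exp_lt_exp.mpr (by linarith)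
  unfold qd; linarith

private lemma qn_lt_qn (σ x : ℝ) {a b : ℝ} (hab : a < b) : qn σ x b < qn σ x a := by
  have h2 : Real.exp (a - x) < Real.exp (b - x) := Real.exp_lt_exp.mpr (by linarith)
  unfold qn; linarith

private lemma qn_self (σ x : ℝ) : qn σ x x = x / (2*σ-1) := by
  unfold qn; simp

private lemma qd_self (σ x : ℝ) : qd σ x x = x / (2*σ-1) := by
  unfold qd; simp

private lemma qd_lt_qn (σ x : ℝ) (hσ : 1/2 < σ) {y : ℝ} (h : y < x) :
    qd σ x y < qn σ x y := by
  have hc : (0:ℝ) < 2*σ-1 := by linarith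
  have h1 : y/(2*σ-1) < x/(2*σ-1) := div_lt_div_of_pos_right h hc
  have h2 : Real.exp (y - x) < Real.exp (x - y) := Real.exp_lt_exp.mpr (by linarith)
  unfold qn qd; linarith

private lemma qd_continuous (σ x : ℝ) : Continuous (fun y => qd σ x y) := by
  unfold qd; continuity

private lemma qn_continuous (σ x : ℝ) : Continuous (fun y => qn σ x y) := by
  unfold qn; continuity

/-- For a fixed base point `h₀ = h(φ₀)`, the composite wave-curve function
`h ↦ F(h₀,h) e^{−φ(h)/2}` is strictly increasing on `(−∞, h(φ(φ₀)))` with range `(0,∞)`,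
where `F(h₀,h) = √(q(φ₀,φ(h)))` for shocks (`h₀ < h`) and `(φ₀/φ(h))^σ` for rarefactions
(`h ≤ h₀`), and `φ(h)` inverts `h(φ) = −∫_{ln2}^φ w^{−σ}√(1+2σ/w) dw`. -/
theorem stmt_18 (σ : ℝ) (hσ : σ ∈ Set.Ioc (1/2 : ℝ) 1)
    (hfun : ℝ → ℝ)
    (hfun_def : ∀ φ > 0,
      hfun φ = -(∫ w in (Real.log 2)..φ, w ^ (-σ) * Real.sqrt (1 + 2 * σ / w)))
    (φinv : ℝ → ℝ)
    (hφinv_pos : ∀ h : ℝ, 0 < φinv h)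
    (hφinv_left : ∀ x > 0, φinv (hfun x) = x)
    (hφinv_right : ∀ h : ℝ, hfun (φinv h) = h)
    (φ₀ h₀ : ℝ) (hφ₀ : 0 < φ₀) (hh₀ : h₀ = hfun φ₀)
    (ψ : ℝ) (hψ_mem : ψ ∈ Set.Ioo 0 φ₀) (hψ_zero : qd σ φ₀ ψ = 0)
    (F : ℝ → ℝ)
    (hF : ∀ h : ℝ, F h = if h₀ < h
        then Real.sqrt (qn σ φ₀ (φinv h) / qd σ φ₀ (φinv h))
        else (φ₀ / φinv h) ^ σ) :
    StrictMonoOn (fun h => F h * Real.exp (-(φinv h) / 2)) (Set.Iio (hfun ψ)) ∧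
    (fun h => F h * Real.exp (-(φinv h) / 2)) '' (Set.Iio (hfun ψ)) = Set.Ioi 0 := by
  obtain ⟨hσ₁, hσ₂⟩ := hσ
  have hσ0 : (0:ℝ) < σ := by linarith
  have hc : (0:ℝ) < 2*σ - 1 := by linarith
  obtain ⟨hψ0, hψφ₀⟩ := hψ_mem
  -- the integrand
  set f : ℝ → ℝ := fun w => w ^ (-σ) * Real.sqrt (1 + 2 * σ / w) with hf
  have hlog2 : (0:ℝ) < Real.log 2 := Real.log_pos one_lt_two
  have fcont : ContinuousOn f (Ioi 0) := by
    apply ContinuousOn.mul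
    · exact continuousOn_id.rpow_const (fun x hx => Or.inl (ne_of_gt hx))
    · exact Real.continuous_sqrt.comp_continuousOn
        (continuousOn_const.add (continuousOn_const.div continuousOn_id
          (fun x hx => ne_of_gt hx)))
  have fpos : ∀ w : ℝ, 0 < w → 0 < f w := by
    intro w hw
    apply mul_pos (Real.rpow_pos_of_pos hw _)
    apply Real.sqrt_pos.mpr
    have : 0 < 2 * σ / w := by positivity
    linarith
  have fint : ∀ a b : ℝ, 0 < a → 0 < b → IntervalIntegrable f volume a b := by
    intro a b ha hb
    apply (fcont.mono ?_).intervalIntegrable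
    intro x hx
    have h1 : min a b ≤ x := hx.1
    have : 0 < min a b := lt_min ha hb
    exact lt_of_lt_of_le this h1
  -- hfun is strictly decreasing on positives
  have hanti : ∀ a b : ℝ, 0 < a → 0 < b → a < b → hfun b < hfun a := by
    intro a b ha hb hab
    rw [hfun_def a ha, hfun_def b hb]
    have hadd : (∫ w in (Real.log 2)..a, f w) + (∫ w in a..b, f w)
        = ∫ w in (Real.log 2)..b, f w :=
      intervalIntegral.integral_add_adjacent_intervals (fint _ _ hlog2 ha) (fint _ _ ha hb)
    have hpos : 0 < ∫ w in a..b, f w := by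
      apply intervalIntegral.intervalIntegral_pos_of_pos_on (fint _ _ ha hb)
        (fun x hx => fpos x (lt_trans ha hx.1)) hab
    have : (∫ w in (Real.log 2)..a, f w) < ∫ w in (Real.log 2)..b, f w := by linarith
    linarith
  have hantile : ∀ a b : ℝ, 0 < a → 0 < b → a ≤ b → hfun b ≤ hfun a := by
    intro a b ha hb hab
    rcases eq_or_lt_of_le hab with h | h
    · rw [h]
    · exact le_of_lt (hanti a b ha hb h)
  -- φinv is strictly decreasing
  have hinv_anti : ∀ h₁ h₂ : ℝ, h₁ < h₂ → φinv h₂ < φinv h₁ := by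
    intro h₁ h₂ h12
    by_contra hcon
    push_neg at hcon
    have := hantile _ _ (hφinv_pos h₁) (hφinv_pos h₂) hcon
    rw [hφinv_right h₁, hφinv_right h₂] at this
    linarith
  -- branch condition
  have hbranch : ∀ h : ℝ, h₀ < h ↔ φinv h < φ₀ := by
    intro h
    constructor
    · intro hh
      by_contra hcon
      push_neg at hcon
      have := hantile _ _ hφ₀ (hφinv_pos h) hcon
      rw [hφinv_right h, ← hh₀] at this
      linarith
    · intro hh
      have := hanti _ _ (hφinv_pos h) hφ₀ hh
      rw [hφinv_right h, ← hh₀] at this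
      linarith
  -- domain condition
  have hdom : ∀ h : ℝ, h < hfun ψ ↔ ψ < φinv h := by
    intro h
    constructor
    · intro hh
      by_contra hcon
      push_neg at hcon
      have := hantile _ _ (hφinv_pos h) hψ0 hcon
      rw [hφinv_right h] at this
      linarith
    · intro hh
      have := hanti _ _ hψ0 (hφinv_pos h) hh
      rw [hφinv_right h] at this
      linarith
  -- positivity of qd on (ψ, ∞) and qn on (-∞, φ₀]
  have hqd_pos : ∀ φ : ℝ, ψ < φ → 0 < qd σ φ₀ φ := by
    intro φ hφ
    have := qd_lt_qd σ φ₀ hσ₁ hφ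
    rw [hψ_zero] at this; exact this
  have hqn_pos : ∀ φ : ℝ, φ ≤ φ₀ → 0 < qn σ φ₀ φ := by
    intro φ hφ
    have h0 : 0 < φ₀ / (2*σ-1) := div_pos hφ₀ hc
    rcases eq_or_lt_of_le hφ with h | h
    · rw [h, qn_self]; exact h0
    · have := qn_lt_qn σ φ₀ h
      rw [qn_self] at this; linarith
  -- the function in terms of φ
  set g : ℝ → ℝ := fun φ =>
    (if φ < φ₀ then Real.sqrt (qn σ φ₀ φ / qd σ φ₀ φ) else (φ₀ / φ) ^ σ)
      * Real.exp (-φ / 2) with hg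
  have hGg : ∀ h : ℝ, F h * Real.exp (-(φinv h) / 2) = g (φinv h) := by
    intro h
    rw [hF h, hg]
    simp only
    congr 1
    exact if_congr (hbranch h) rfl rfl
  -- g is positive on (ψ, ∞)
  have hgpos : ∀ φ : ℝ, ψ < φ → 0 < g φ := by
    intro φ hφ
    rw [hg]
    simp only
    apply mul_pos _ (Real.exp_pos _)
    by_cases hcase : φ < φ₀
    · rw [if_pos hcase]
      exact Real.sqrt_pos.mpr (div_pos (hqn_pos φ (le_of_lt hcase)) (hqd_pos φ hφ))
    · rw [if_neg hcase]
      push_neg at hcase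
      exact Real.rpow_pos_of_pos (div_pos hφ₀ (lt_of_lt_of_le hφ₀ hcase)) _
  -- g is strictly decreasing on (ψ, ∞)
  have hgmono : ∀ φ₂ φ₁ : ℝ, ψ < φ₂ → φ₂ < φ₁ → g φ₁ < g φ₂ := by
    intro φ₂ φ₁ hφ₂ h21
    rw [hg]; simp only
    have hexp : Real.exp (-φ₁ / 2) < Real.exp (-φ₂ / 2) :=
      Real.exp_lt_exp.mpr (by linarith)
    by_cases h1 : φ₁ < φ₀
    · -- both shocks
      have h2 : φ₂ < φ₀ := lt_trans h21 h1
      rw [if_pos h1, if_pos h2]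
      have hq1 : 0 < qd σ φ₀ φ₁ := hqd_pos _ (lt_trans hφ₂ h21)
      have hq2 : 0 < qd σ φ₀ φ₂ := hqd_pos _ hφ₂
      have hn1 : 0 < qn σ φ₀ φ₁ := hqn_pos _ (le_of_lt h1)
      have hn2 : 0 < qn σ φ₀ φ₂ := hqn_pos _ (le_of_lt h2)
      have hratio : qn σ φ₀ φ₁ / qd σ φ₀ φ₁ < qn σ φ₀ φ₂ / qd σ φ₀ φ₂ := by
        rw [div_lt_div_iff₀ hq1 hq2]
        have ha := qn_lt_qn σ φ₀ h21
        have hb := qd_lt_qd σ φ₀ hσ₁ h21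
        nlinarith
      exact mul_lt_mul'' (Real.sqrt_lt_sqrt (le_of_lt (div_pos hn1 hq1)) hratio)
        hexp (Real.sqrt_nonneg _) (le_of_lt (Real.exp_pos _))
    · push_neg at h1
      rw [if_neg (not_lt.mpr h1)]
      by_cases h2 : φ₂ < φ₀
      · -- mixed case
        rw [if_pos h2]
        have hq2 : 0 < qd σ φ₀ φ₂ := hqd_pos _ hφ₂
        have hone : 1 < Real.sqrt (qn σ φ₀ φ₂ / qd σ φ₀ φ₂) := by
          have hr : 1 < qn σ φ₀ φ₂ / qd σ φ₀ φ₂ :=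
            (one_lt_div hq2).mpr (qd_lt_qn σ φ₀ hσ₁ h2)
          calc (1:ℝ) = Real.sqrt 1 := Real.sqrt_one.symm
          _ < _ := Real.sqrt_lt_sqrt (by norm_num) hr
        have hle1 : (φ₀ / φ₁) ^ σ ≤ 1 :=
          Real.rpow_le_one (le_of_lt (div_pos hφ₀ (lt_of_lt_of_le hφ₀ h1)))
            ((div_le_one (lt_of_lt_of_le hφ₀ h1)).mpr h1) (le_of_lt hσ0)
        have step1 : (φ₀ / φ₁) ^ σ * Real.exp (-φ₁ / 2) ≤ Real.exp (-φ₀ / 2) := by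
          calc (φ₀ / φ₁) ^ σ * Real.exp (-φ₁ / 2)
              ≤ 1 * Real.exp (-φ₀ / 2) := by
                apply mul_le_mul hle1 (Real.exp_le_exp.mpr (by linarith))
                  (le_of_lt (Real.exp_pos _)) (by norm_num)
          _ = Real.exp (-φ₀ / 2) := one_mul _
        have step2 : Real.exp (-φ₀ / 2) < Real.exp (-φ₂ / 2) :=
          Real.exp_lt_exp.mpr (by linarith)
        have step3 : Real.exp (-φ₂ / 2)
            < Real.sqrt (qn σ φ₀ φ₂ / qd σ φ₀ φ₂) * Real.exp (-φ₂ / 2) := by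
          nlinarith [Real.exp_pos (-φ₂ / 2)]
        linarith
      · -- both rarefactions
        rw [if_neg h2]
        push_neg at h2
        have hφ₂0 : 0 < φ₂ := lt_of_lt_of_le hφ₀ h2
        have hdiv : φ₀ / φ₁ < φ₀ / φ₂ := div_lt_div_of_pos_left hφ₀ hφ₂0 h21
        exact mul_lt_mul''
          (Real.rpow_lt_rpow (le_of_lt (div_pos hφ₀ (lt_trans hφ₂0 h21))) hdiv hσ0)
          hexp (Real.rpow_nonneg (le_of_lt (div_pos hφ₀ (lt_trans hφ₂0 h21))) _)
          (le_of_lt (Real.exp_pos _))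
  constructor
  · -- strict monotonicity
    intro h₁ h₁mem h₂ h₂mem h12
    simp only
    rw [hGg h₁, hGg h₂]
    exact hgmono (φinv h₂) (φinv h₁) ((hdom h₂).mp h₂mem) (hinv_anti _ _ h12)
  · -- image
    ext y
    simp only [Set.mem_image, Set.mem_Iio, Set.mem_Ioi]
    constructor
    · rintro ⟨h, hmem, rfl⟩
      rw [hGg h]
      exact hgpos _ ((hdom h).mp hmem)
    · intro hy
      -- find φ > ψ with g φ = y, then take h := hfun φ
      suffices hsuff : ∃ φ : ℝ, ψ < φ ∧ g φ = y by
        obtain ⟨φ, hφψ, hφy⟩ := hsuff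
        have hφpos : 0 < φ := lt_trans hψ0 hφψ
        refine ⟨hfun φ, hanti ψ φ hψ0 hφpos hφψ, ?_⟩
        rw [hGg (hfun φ), hφinv_left φ hφpos, hφy]
      by_cases hcase : y ≤ Real.exp (-φ₀ / 2)
      · -- use the rarefaction branch on [φ₀, b]
        set g₂ : ℝ → ℝ := fun φ => (φ₀ / φ) ^ σ * Real.exp (-φ / 2) with hg₂
        have hg₂cont : ContinuousOn g₂ (Ici φ₀) := by
          apply ContinuousOn.mul
          · apply ContinuousOn.rpow_const
            · apply ContinuousOn.div continuousOn_const continuousOn_id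
              intro x hx
              exact ne_of_gt (lt_of_lt_of_le hφ₀ hx)
            · intro x hx; exact Or.inr (le_of_lt hσ0)
          · exact (Real.continuous_exp.comp (continuous_id.neg.div_const 2)).continuousOn
        set b : ℝ := max φ₀ (-(2 * Real.log y) + 2) with hb
        have hbφ₀ : φ₀ ≤ b := le_max_left _ _
        have hblog : -(2 * Real.log y) < b := by
          have := le_max_right φ₀ (-(2 * Real.log y) + 2)
          linarith
        have hgb : g₂ b < y := by
          have h1 : Real.exp (-b / 2) < y := by
            calc Real.exp (-b / 2) < Real.exp (Real.log y) :=
              Real.exp_lt_exp.mpr (by linarith)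
            _ = y := Real.exp_log hy
          have h2 : (φ₀ / b) ^ σ ≤ 1 :=
            Real.rpow_le_one (le_of_lt (div_pos hφ₀ (lt_of_lt_of_le hφ₀ hbφ₀)))
              ((div_le_one (lt_of_lt_of_le hφ₀ hbφ₀)).mpr hbφ₀) (le_of_lt hσ0)
          have h3 : g₂ b ≤ Real.exp (-b / 2) := by
            rw [hg₂]
            calc (φ₀ / b) ^ σ * Real.exp (-b / 2) ≤ 1 * Real.exp (-b / 2) :=
              mul_le_mul_of_nonneg_right h2 (le_of_lt (Real.exp_pos _))
            _ = _ := one_mul _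
          linarith
        have hgφ₀ : g₂ φ₀ = Real.exp (-φ₀ / 2) := by
          rw [hg₂]; simp [div_self (ne_of_gt hφ₀), Real.one_rpow]
        have hival : y ∈ Icc (g₂ b) (g₂ φ₀) := ⟨le_of_lt hgb, by rw [hgφ₀]; exact hcase⟩
        obtain ⟨φ, hφmem, hφval⟩ :=
          intermediate_value_Icc' hbφ₀ (hg₂cont.mono Icc_subset_Ici_self) hival
        refine ⟨φ, lt_of_lt_of_le hψφ₀ hφmem.1, ?_⟩
        rw [hg]
        simp only
        rw [if_neg (not_lt.mpr hφmem.1)]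
        exact hφval
      · -- use the shock branch near ψ
        push_neg at hcase
        set g₁ : ℝ → ℝ := fun φ => Real.sqrt (qn σ φ₀ φ / qd σ φ₀ φ) * Real.exp (-φ / 2)
          with hg₁
        have hg₁cont : ContinuousOn g₁ (Ioc ψ φ₀) := by
          apply ContinuousOn.mul
          · apply Real.continuous_sqrt.comp_continuousOn
            apply ContinuousOn.div (qn_continuous σ φ₀).continuousOn
              (qd_continuous σ φ₀).continuousOn
            intro x hx
            exact ne_of_gt (hqd_pos x hx.1)
          · exact (Real.continuous_exp.comp (continuous_id.neg.div_const 2)).continuousOn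
        -- choose ε and φa
        set ε : ℝ := qn σ φ₀ φ₀ * Real.exp (-φ₀) / (2 * y ^ 2) with hε
        have hqnφ₀ : 0 < qn σ φ₀ φ₀ := hqn_pos φ₀ le_rfl
        have hεpos : 0 < ε := by
          rw [hε]; positivity
        have hev1 : ∀ᶠ x in 𝓝[>] ψ, qd σ φ₀ x < ε := by
          apply Filter.Eventually.filter_mono nhdsWithin_le_nhds
          have := (qd_continuous σ φ₀).continuousAt (x := ψ)
          apply this.eventually_lt continuousAt_const
          rw [hψ_zero]; exact hεpos
        have hev2 : ∀ᶠ x in 𝓝[>] ψ, x ∈ Ioo ψ φ₀ :=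
          Ioo_mem_nhdsGT_of_mem ⟨le_rfl, hψφ₀⟩
        obtain ⟨φa, ha1, ha2⟩ := (hev1.and hev2).exists
        have hqda : 0 < qd σ φ₀ φa := hqd_pos _ ha2.1
        have hqna : qn σ φ₀ φ₀ < qn σ φ₀ φa := qn_lt_qn σ φ₀ ha2.2
        have hkey : y ^ 2 * Real.exp φ₀ * ε = qn σ φ₀ φ₀ / 2 := by
          rw [hε, Real.exp_neg]
          have hy' : y ≠ 0 := ne_of_gt hy
          have he : Real.exp φ₀ ≠ 0 := ne_of_gt (Real.exp_pos _)
          field_simp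
        have hr : y ^ 2 * Real.exp φ₀ < qn σ φ₀ φa / qd σ φ₀ φa := by
          rw [lt_div_iff₀ hqda]
          have h1 : y ^ 2 * Real.exp φ₀ * qd σ φ₀ φa < y ^ 2 * Real.exp φ₀ * ε := by
            apply mul_lt_mul_of_pos_left ha1
            positivity
          rw [hkey] at h1
          linarith
        have hya : y < g₁ φa := by
          have hsq : y * Real.exp (φa / 2) < Real.sqrt (qn σ φ₀ φa / qd σ φ₀ φa) := by
            rw [show y * Real.exp (φa / 2)
                = Real.sqrt ((y * Real.exp (φa / 2)) ^ 2) from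
              (Real.sqrt_sq (by positivity)).symm]
            apply Real.sqrt_lt_sqrt (by positivity)
            have hea : Real.exp φa < Real.exp φ₀ := Real.exp_lt_exp.mpr ha2.2
            have hh : Real.exp (φa / 2) ^ 2 = Real.exp φa := by
              rw [sq, ← Real.exp_add]
              norm_num
            rw [mul_pow, hh]
            nlinarith
          have h2 := mul_lt_mul_of_pos_right hsq (Real.exp_pos (-φa / 2))
          have h3 : y * Real.exp (φa / 2) * Real.exp (-φa / 2) = y := by
            rw [mul_assoc, ← Real.exp_add]
            have : φa / 2 + -φa / 2 = 0 := by ring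
            rw [this, Real.exp_zero, mul_one]
          rw [h3] at h2
          exact h2
        have hg₁φ₀ : g₁ φ₀ = Real.exp (-φ₀ / 2) := by
          rw [hg₁]
          simp only
          rw [qn_self, qd_self, div_self (ne_of_gt (div_pos hφ₀ hc)), Real.sqrt_one,
            one_mul]
        have hival : y ∈ Icc (g₁ φ₀) (g₁ φa) :=
          ⟨by rw [hg₁φ₀]; exact le_of_lt hcase, le_of_lt hya⟩
        have hsub : Icc φa φ₀ ⊆ Ioc ψ φ₀ := fun x hx => ⟨lt_of_lt_of_le ha2.1 hx.1, hx.2⟩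
        obtain ⟨φ, hφmem, hφval⟩ :=
          intermediate_value_Icc' (le_of_lt ha2.2) (hg₁cont.mono hsub) hival
        refine ⟨φ, lt_of_lt_of_le ha2.1 hφmem.1, ?_⟩
        rcases lt_or_eq_of_le hφmem.2 with hlt | heq
        · rw [hg]
          simp only
          rw [if_pos hlt]
          exact hφval
        · exfalso
          rw [heq, hg₁φ₀] at hφval
          linarith
end
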